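/- Let k, k̂ > 0, ζ, ζ̂ ∈ ℝ, Δ ∈ (0, π/4], and suppose |ζ - ζ̂| < π/2 - Δ. Define ζ̂₁ = ζ̂ - Δ, ζ̂₂ = ζ̂ + Δ, c₁ = (k/k̂)·cos(ζ - ζ̂₁), c₂ = (k/k̂)·cos(ζ - ζ̂₂). Then c₁ ≠ 0 and ζ = ζ̂₁ + arctan((c₂/c₁ - cos(2Δ))/sin(2Δ)). -/

import Mathlib

open Real

/-!
With `θ = ζ - ζ̂₁` the measured ratio is `c₂ / c₁ = cos (θ - 2Δ) / cos θ = cos 2Δ + tan θ · sin 2Δ`,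
so the argument of the arctangent is exactly `tan θ`. The closeness assumption puts `θ` in
`(-π/2, π/2)`, where `arctan` inverts `tan` and `cos θ > 0`, so that `c₁ ≠ 0`.
-/

theorem cos_sub_div_cos_sub_cos_div_sin {θ φ : ℝ} (hθ : cos θ ≠ 0) (hφ : sin φ ≠ 0) :
    (cos (θ - φ) / cos θ - cos φ) / sin φ = tan θ := by
  rw [cos_sub, tan_eq_sin_div_cos]
  field_simp
  ring

theorem arctan_cos_sub_div_cos_sub_cos_div_sin {θ φ : ℝ} (hθ : θ ∈ Set.Ioo (-(π / 2)) (π / 2))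
    (hφ : sin φ ≠ 0) : arctan ((cos (θ - φ) / cos θ - cos φ) / sin φ) = θ := by
  rw [cos_sub_div_cos_sub_cos_div_sin (cos_pos_of_mem_Ioo hθ).ne' hφ, arctan_tan hθ.1 hθ.2]

theorem calibration_phase_recovery
    (k khat ζ ζhat Δ ζhat1 ζhat2 c1 c2 : ℝ)
    (hk : 0 < k) (hkhat : 0 < khat)
    (hΔ : Δ ∈ Set.Ioc 0 (Real.pi / 4))
    (hclose : |ζ - ζhat| < Real.pi / 2 - Δ)
    (h1 : ζhat1 = ζhat - Δ) (h2 : ζhat2 = ζhat + Δ)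
    (hc1 : c1 = (k / khat) * Real.cos (ζ - ζhat1))
    (hc2 : c2 = (k / khat) * Real.cos (ζ - ζhat2)) :
    c1 ≠ 0 ∧
      ζ = ζhat1 + Real.arctan ((c2 / c1 - Real.cos (2 * Δ)) / Real.sin (2 * Δ)) := by
  subst h1 h2 hc1 hc2
  obtain ⟨hΔ0, hΔle⟩ := hΔ
  have hclose' := abs_lt.mp hclose
  have hθ : ζ - (ζhat - Δ) ∈ Set.Ioo (-(π / 2)) (π / 2) := ⟨by linarith, by linarith⟩
  have hsin : sin (2 * Δ) ≠ 0 := (sin_pos_of_pos_of_lt_pi (by linarith) (by linarith)).ne'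
  have hscale : k / khat ≠ 0 := (div_pos hk hkhat).ne'
  have hcos : cos (ζ - (ζhat - Δ)) ≠ 0 := (cos_pos_of_mem_Ioo hθ).ne'
  have hratio : k / khat * cos (ζ - (ζhat + Δ)) / (k / khat * cos (ζ - (ζhat - Δ)))
      = cos (ζ - (ζhat - Δ) - 2 * Δ) / cos (ζ - (ζhat - Δ)) := by
    rw [mul_div_mul_left _ _ hscale]
    ring_nf
  refine ⟨mul_ne_zero hscale hcos, ?_⟩
  rw [hratio, arctan_cos_sub_div_cos_sub_cos_div_sin hθ hsin]
  ring
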